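/- arXiv:2405.17033 — 7 statements merged into one kernel-verified Lean document; each statement's English description precedes it below -/
import Mathlib

section
/- For every n ∈ ℕ and every tuple (k_1,...,k_n) ∈ ℕ₀^n with ∑_{ℓ=1}^n ℓ·k_ℓ = n, one has ∏_{ℓ=1}^n ℓ^{ℓ·k_ℓ} ≤ (n^n / n!) · ∏_{ℓ=1}^n (ℓ!)^{k_ℓ}. -/
/-!
For block sizes `m i` summing to `N`, the product of the multinomial coefficient
`N! / ∏ (m i)!` with `∏ (m i) ^ (m i)` is one term of the multinomial expansion of
`(∑ m i) ^ N = N ^ N`, hence at most `N ^ N`. The theorem is the case of `k ℓ` blocks of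
size `ℓ` for each `ℓ`, where `N = n`.
-/

open Finset Nat

theorem Nat.multinomial_mul_prod_pow_self_le {ι : Type*} (s : Finset ι) (m : ι → ℕ) :
    multinomial s m * ∏ i ∈ s, m i ^ m i ≤ (∑ i ∈ s, m i) ^ ∑ i ∈ s, m i := by
  classical
  -- `piAntidiag` only contains functions supported on `s`.
  set m' := s.piecewise m 0
  have hm' : ∀ i ∈ s, m' i = m i := fun i hi => s.piecewise_eq_of_mem _ _ hi
  have hmem : m' ∈ piAntidiag s (∑ i ∈ s, m i) := by
    refine mem_piAntidiag.2 ⟨sum_congr rfl hm', fun i hi => ?_⟩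
    by_contra hs
    exact hi (s.piecewise_eq_of_notMem _ _ hs)
  calc multinomial s m * ∏ i ∈ s, m i ^ m i = multinomial s m' * ∏ i ∈ s, m i ^ m' i := by
        rw [multinomial_congr hm']
        exact congrArg _ (prod_congr rfl fun i hi => by rw [hm' i hi])
    _ ≤ ∑ k ∈ piAntidiag s (∑ i ∈ s, m i), multinomial s k * ∏ i ∈ s, m i ^ k i :=
        single_le_sum (f := fun k => multinomial s k * ∏ i ∈ s, m i ^ k i)
          (fun _ _ => Nat.zero_le _) hmem
    _ = (∑ i ∈ s, m i) ^ ∑ i ∈ s, m i := (sum_pow_eq_sum_piAntidiag s m _).symm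

theorem Nat.prod_pow_self_mul_factorial_sum_le {ι : Type*} (s : Finset ι) (m : ι → ℕ) :
    (∏ i ∈ s, m i ^ m i) * (∑ i ∈ s, m i)! ≤
      (∑ i ∈ s, m i) ^ (∑ i ∈ s, m i) * ∏ i ∈ s, (m i)! := by
  rw [← multinomial_spec s m]
  calc (∏ i ∈ s, m i ^ m i) * ((∏ i ∈ s, (m i)!) * multinomial s m)
      = (multinomial s m * ∏ i ∈ s, m i ^ m i) * ∏ i ∈ s, (m i)! := by ring
    _ ≤ _ := Nat.mul_le_mul_right _ (multinomial_mul_prod_pow_self_le s m)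

theorem stmt_0 (n : ℕ) (k : ℕ → ℕ)
    (hk : ∑ ℓ ∈ Finset.Icc 1 n, ℓ * k ℓ = n) :
    (∏ ℓ ∈ Finset.Icc 1 n, ℓ ^ (ℓ * k ℓ)) * n.factorial ≤
      n ^ n * ∏ ℓ ∈ Finset.Icc 1 n, (ℓ.factorial) ^ (k ℓ) := by
  have h := prod_pow_self_mul_factorial_sum_le
    ((Icc 1 n).sigma fun ℓ => range (k ℓ)) (fun p => p.1)
  simp only [sum_sigma, prod_sigma, sum_const, prod_const, card_range, smul_eq_mul,
    ← pow_mul] at h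
  simp only [mul_comm (k _), hk] at h
  exact h
end

section
/- For every n ∈ ℕ, the sum of reciprocals of binomial coefficients satisfies ∑_{k=0}^n (C(n,k))^{-1} = ((n+1)/2^n) · ∑_{k=0}^n 2^k/(k+1). -/
/-!
Consecutive terms pair up: `1/C(n+1,k) + 1/C(n+1,k+1) = (n+2)/(n+1) · 1/C(n,k)`. Summing over
`k ≤ n` counts every term of row `n+1` twice except the two outer ones, which equal `1`, so
`S (n+1) = 1 + (n+2)/(2(n+1)) · S n` for `S n = ∑ₖ 1/C(n,k)`; the right-hand side of the identity
satisfies the same recurrence.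
-/

open Finset

section Field

variable {K : Type*} [Field K] [CharZero K]

theorem inv_choose_succ_add_inv_choose_succ_succ {n k : ℕ} (hk : k ≤ n) :
    (((n + 1).choose k : K))⁻¹ + (((n + 1).choose (k + 1) : K))⁻¹ =
      (n + 2) / (n + 1) * ((n.choose k : K))⁻¹ := by
  have hle : k ≤ n + 1 := hk.trans n.le_succ
  have hlow : ((n + 1).choose k : K)⁻¹ = (n + 1 - k) / (n.choose k * (n + 1)) := by
    have h := congrArg (Nat.cast (R := K)) (Nat.choose_mul_succ_eq n k)
    push_cast [Nat.cast_sub hle] at h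
    have hsub : ((n + 1 - k : ℕ) : K) ≠ 0 := by exact_mod_cast (by omega : n + 1 - k ≠ 0)
    push_cast [Nat.cast_sub hle] at hsub
    rw [h, div_mul_cancel_right₀ hsub]
  have hhigh : ((n + 1).choose (k + 1) : K)⁻¹ = (k + 1) / ((n + 1) * n.choose k) := by
    have h : ((n + 1) * n.choose k : K) = (n + 1).choose (k + 1) * (k + 1) := by
      exact_mod_cast Nat.add_one_mul_choose_eq n k
    rw [h, div_mul_cancel_right₀ k.cast_add_one_ne_zero]
  rw [hlow, hhigh]
  field_simp
  ring

theorem sum_range_inv_choose_succ (n : ℕ) :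
    ∑ k ∈ range (n + 2), (((n + 1).choose k : K))⁻¹ =
      1 + (n + 2) / (n + 1) / 2 * ∑ k ∈ range (n + 1), ((n.choose k : K))⁻¹ := by
  have hlast := sum_range_succ (fun k ↦ (((n + 1).choose k : K))⁻¹) (n + 1)
  have hfirst := sum_range_succ' (fun k ↦ (((n + 1).choose k : K))⁻¹) (n + 1)
  simp only [Nat.choose_self, Nat.choose_zero_right, Nat.cast_one, inv_one] at hlast hfirst
  have hpairs : ∑ k ∈ range (n + 1), (((n + 1).choose k : K))⁻¹ +
      ∑ k ∈ range (n + 1), (((n + 1).choose (k + 1) : K))⁻¹ =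
        (n + 2) / (n + 1) * ∑ k ∈ range (n + 1), ((n.choose k : K))⁻¹ := by
    rw [← sum_add_distrib, mul_sum]
    exact sum_congr rfl fun k hk ↦
      inv_choose_succ_add_inv_choose_succ_succ (Nat.lt_succ_iff.mp (mem_range.mp hk))
  linear_combination (hlast + hfirst + hpairs) / 2

end Field

theorem stmt_2 (n : ℕ) :
    ∑ k ∈ Finset.range (n + 1), ((n.choose k : ℝ))⁻¹ =
      ((n + 1 : ℝ) / 2 ^ n) * ∑ k ∈ Finset.range (n + 1), (2 : ℝ) ^ k / (k + 1) := by
  induction n with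
  | zero => norm_num
  | succ n ih =>
    rw [sum_range_inv_choose_succ, ih, sum_range_succ _ (n + 1)]
    push_cast
    field_simp
    ring
end

section
/- For every n ∈ ℕ, ∑_{k=0}^n (C(n,k))^{-1} ≤ 3. -/
open Finset

theorem Nat.le_choose_of_pos_of_lt {n k : ℕ} (hk : 0 < k) (hkn : k < n) : n ≤ n.choose k := by
  induction n generalizing k with
  | zero => omega
  | succ m ih =>
    obtain ⟨i, rfl⟩ := Nat.exists_eq_add_of_lt hk
    rcases (show i + 1 = m ∨ i + 1 < m by omega) with rfl | him
    · simp [Nat.choose_succ_self_right]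
    · rw [zero_add, Nat.choose_succ_succ']
      have hpos := Nat.choose_pos (show i ≤ m by omega)
      have hle := ih (k := i + 1) (Nat.succ_pos i) him
      omega

theorem sum_Ioo_inv_choose_le_one (n : ℕ) : ∑ k ∈ Ioo 0 n, ((n.choose k : ℝ))⁻¹ ≤ 1 := by
  calc ∑ k ∈ Ioo 0 n, ((n.choose k : ℝ))⁻¹
      ≤ ∑ _k ∈ Ioo 0 n, (n : ℝ)⁻¹ := by
        refine sum_le_sum fun k hk => ?_
        obtain ⟨hk0, hkn⟩ := mem_Ioo.mp hk
        exact inv_anti₀ (by exact_mod_cast hk0.trans hkn)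
          (by exact_mod_cast Nat.le_choose_of_pos_of_lt hk0 hkn)
    _ = ((n - 1 : ℕ) : ℝ) / n := by simp [div_eq_mul_inv]
    _ ≤ 1 := div_le_one_of_le₀ (by exact_mod_cast n.sub_le 1) n.cast_nonneg

theorem stmt_3 (n : ℕ) :
    ∑ k ∈ Finset.range (n + 1), ((n.choose k : ℝ))⁻¹ ≤ 3 := by
  rcases n.eq_zero_or_pos with rfl | hn
  · norm_num
  rw [Nat.range_succ_eq_Icc_zero, Icc_eq_cons_Ioc n.zero_le, sum_cons, Ioc_eq_cons_Ioo hn, sum_cons,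
    Nat.choose_zero_right, Nat.choose_self, Nat.cast_one, inv_one]
  linarith [sum_Ioo_inv_choose_le_one n]
end

section
/- For natural numbers n ≥ k ≥ 1, let H_{n,k} be the set of tuples (k_1,...,k_n) ∈ ℕ₀^n with ∑_{ℓ=1}^n k_ℓ = k and ∑_{ℓ=1}^n ℓ·k_ℓ = n. Then ∑_{(k_1,...,k_n) ∈ H_{n,k}} ∏_{ℓ=1}^n (ℓ!)^{k_ℓ} ≤ n!. -/
/-!
Encode a tuple `f ∈ H_{n,k}` by the multiset of its parts, each lowered by one: it has `k`
elements summing to `n - k`. Since `(a + 1)! (b + 1)! ≤ (a + b + 1)!`, every summand is at most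
`(n - k + 1)!`. Sorting that multiset and dropping its largest element loses nothing (the dropped
element is `n - k` minus the rest), and what remains is a list of `k - 1` numbers in `[0, n - k]`;
so `H_{n,k}` has at most `(n - k + 1)^(k - 1)` elements. Finally
`(n - k + 1)^(k - 1) (n - k + 1)! ≤ n!`.
-/

open Finset

theorem Nat.factorial_succ_mul_factorial_succ_le (a b : ℕ) :
    (a + 1).factorial * (b + 1).factorial ≤ (a + b + 1).factorial := by
  induction a with
  | zero => simp
  | succ a ih =>
    calc (a + 2).factorial * (b + 1).factorial
        = (a + 2) * ((a + 1).factorial * (b + 1).factorial) := by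
          rw [Nat.factorial_succ (a + 1), mul_assoc]
      _ ≤ (a + b + 2) * (a + b + 1).factorial := by gcongr; omega
      _ = (a + 1 + b + 1).factorial := by rw [← Nat.factorial_succ]; ring_nf

theorem Multiset.prod_map_factorial_succ_le (s : Multiset ℕ) :
    (s.map fun p => (p + 1).factorial).prod ≤ (s.sum + 1).factorial := by
  induction s using Multiset.induction_on with
  | empty => simp
  | cons a s ih =>
    rw [Multiset.map_cons, Multiset.prod_cons, Multiset.sum_cons]
    calc (a + 1).factorial * (s.map fun p => (p + 1).factorial).prod
        ≤ (a + 1).factorial * (s.sum + 1).factorial := by gcongr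
      _ ≤ (a + s.sum + 1).factorial := Nat.factorial_succ_mul_factorial_succ_le a s.sum

theorem List.eq_of_dropLast_eq_of_sum_eq {M : Type*} [AddCancelMonoid M] {l₁ l₂ : List M}
    (hlen : l₁.length = l₂.length) (hsum : l₁.sum = l₂.sum) (hdrop : l₁.dropLast = l₂.dropLast) :
    l₁ = l₂ := by
  rcases eq_or_ne l₁ [] with rfl | h₁
  · exact (List.length_eq_zero_iff.mp hlen.symm).symm
  have h₂ : l₂ ≠ [] := by rintro rfl; exact h₁ (List.length_eq_zero_iff.mp hlen)
  rw [← List.dropLast_append_getLast h₁, ← List.dropLast_append_getLast h₂] at hsum ⊢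
  simp only [List.sum_append, List.sum_singleton, hdrop, add_left_cancel_iff] at hsum
  rw [hdrop, hsum]

theorem Finset.card_le_pow_of_forall_length_eq {α : Type*} {A : Finset (List α)} {t : Finset α}
    {m : ℕ} (hlen : ∀ l ∈ A, l.length = m) (hmem : ∀ l ∈ A, ∀ x ∈ l, x ∈ t) :
    #A ≤ #t ^ m := by
  classical
  calc #A ≤ #(Fintype.piFinset fun _ : Fin m => t.map .some) := by
        refine card_le_card_of_injOn (fun l i => l[i.val]?) (fun l hl => ?_) fun l₁ hl₁ l₂ hl₂ h => ?_
        · refine Fintype.mem_piFinset.mpr fun i => mem_map.mpr ?_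
          have hi : i.val < l.length := (hlen l hl).symm ▸ i.isLt
          exact ⟨l[i.val], hmem l hl _ (List.getElem_mem hi), (List.getElem?_eq_getElem hi).symm⟩
        · refine List.ext_getElem? fun i => ?_
          by_cases hi : i < m
          · exact congrFun h ⟨i, hi⟩
          · rw [List.getElem?_eq_none (by rw [hlen l₁ hl₁]; omega),
              List.getElem?_eq_none (by rw [hlen l₂ hl₂]; omega)]
    _ = #t ^ m := by simp

/-- The parts of the partition with multiplicities `f`, each lowered by one. -/
def partsMultiset {n : ℕ} (f : Fin n → ℕ) : Multiset ℕ :=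
  ∑ ℓ : Fin n, f ℓ • {ℓ.val}

section partsMultiset

variable {n : ℕ} (f : Fin n → ℕ)

theorem card_partsMultiset : Multiset.card (partsMultiset f) = ∑ ℓ, f ℓ := by
  simp [partsMultiset, Multiset.card_sum]

theorem sum_partsMultiset_add_card :
    (partsMultiset f).sum + Multiset.card (partsMultiset f) = ∑ ℓ : Fin n, (ℓ.val + 1) * f ℓ := by
  simp only [partsMultiset, Multiset.sum_sum, Multiset.card_sum, ← sum_add_distrib,
    Multiset.sum_nsmul, Multiset.card_nsmul, Multiset.sum_singleton, Multiset.card_singleton]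
  exact sum_congr rfl fun ℓ _ => by simp only [smul_eq_mul]; ring

theorem count_partsMultiset (ℓ : Fin n) : (partsMultiset f).count ℓ.val = f ℓ := by
  rw [partsMultiset, Multiset.count_sum', sum_eq_single ℓ]
  · simp
  · intro b _ hb
    simp [Fin.val_ne_of_ne (Ne.symm hb)]
  · simp

theorem partsMultiset_injective : Function.Injective (partsMultiset (n := n)) :=
  fun f g h => funext fun ℓ => by rw [← count_partsMultiset f, ← count_partsMultiset g, h]

theorem prod_map_factorial_partsMultiset :
    ((partsMultiset f).map fun p => (p + 1).factorial).prod =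
      ∏ ℓ : Fin n, (ℓ.val + 1).factorial ^ f ℓ := by
  rw [partsMultiset, ← Multiset.coe_mapAddMonoidHom, map_sum, Multiset.prod_sum]
  refine prod_congr rfl fun ℓ _ => ?_
  rw [Multiset.coe_mapAddMonoidHom, Multiset.map_nsmul, Multiset.prod_nsmul, Multiset.map_singleton, Multiset.prod_singleton]

end partsMultiset

/-- `H_{n,k}`, where `f ℓ` is the multiplicity of the part `ℓ.val + 1`. -/
def multiplicityTuples (n k : ℕ) : Finset (Fin n → ℕ) :=
  (Finset.Nat.antidiagonalTuple n k).filter fun f => ∑ ℓ : Fin n, (ℓ.val + 1) * f ℓ = n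

section multiplicityTuples

variable {n k : ℕ} {f : Fin n → ℕ}

theorem card_partsMultiset_of_mem (hf : f ∈ multiplicityTuples n k) :
    Multiset.card (partsMultiset f) = k := by
  simp only [multiplicityTuples, mem_filter, Finset.Nat.mem_antidiagonalTuple] at hf
  rw [card_partsMultiset, hf.1]

theorem sum_partsMultiset_of_mem (hf : f ∈ multiplicityTuples n k) :
    (partsMultiset f).sum = n - k := by
  have hsum := sum_partsMultiset_add_card f
  rw [card_partsMultiset_of_mem hf, (mem_filter.mp hf).2] at hsum
  omega

theorem prod_factorial_pow_le_of_mem (hf : f ∈ multiplicityTuples n k) :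
    ∏ ℓ : Fin n, (ℓ.val + 1).factorial ^ f ℓ ≤ (n - k + 1).factorial := by
  rw [← prod_map_factorial_partsMultiset, ← sum_partsMultiset_of_mem hf]
  exact Multiset.prod_map_factorial_succ_le _

theorem card_multiplicityTuples_le (n k : ℕ) :
    #(multiplicityTuples n k) ≤ (n - k + 1) ^ (k - 1) := by
  set sortedParts : (Fin n → ℕ) → List ℕ := fun f => (partsMultiset f).sort (· ≤ ·)
  have length_sortedParts {f} (hf : f ∈ multiplicityTuples n k) : (sortedParts f).length = k := by
    rw [Multiset.length_sort, card_partsMultiset_of_mem hf]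
  have sum_sortedParts {f} (hf : f ∈ multiplicityTuples n k) : (sortedParts f).sum = n - k := by
    rw [← Multiset.sum_coe, Multiset.sort_eq, sum_partsMultiset_of_mem hf]
  have hinj : Set.InjOn (fun f => (sortedParts f).dropLast) (multiplicityTuples n k) := by
    intro f hf g hg hfg
    apply partsMultiset_injective
    rw [← Multiset.sort_eq (partsMultiset f) (· ≤ ·), ← Multiset.sort_eq (partsMultiset g) (· ≤ ·)]
    exact congrArg _ <| List.eq_of_dropLast_eq_of_sum_eq
      ((length_sortedParts hf).trans (length_sortedParts hg).symm)
      ((sum_sortedParts hf).trans (sum_sortedParts hg).symm) hfg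
  rw [← card_image_of_injOn hinj, ← card_range (n - k + 1)]
  refine card_le_pow_of_forall_length_eq ?_ ?_ <;> simp only [mem_image]
  · rintro _ ⟨f, hf, rfl⟩
    rw [List.length_dropLast, length_sortedParts hf]
  · rintro _ ⟨f, hf, rfl⟩ x hx
    have hx' : x ∈ partsMultiset f := (Multiset.mem_sort _).mp (List.dropLast_subset _ hx)
    exact mem_range.mpr (Nat.lt_succ_of_le
      (sum_partsMultiset_of_mem hf ▸ Multiset.le_sum_of_mem hx'))

end multiplicityTuples

theorem stmt_5 (n k : ℕ) (hk : 1 ≤ k) (hkn : k ≤ n) :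
    ∑ f ∈ (Finset.Nat.antidiagonalTuple n k).filter
        (fun f : Fin n → ℕ => ∑ ℓ : Fin n, (ℓ.val + 1) * f ℓ = n),
      ∏ ℓ : Fin n, ((ℓ.val + 1).factorial) ^ (f ℓ) ≤ n.factorial := by
  calc ∑ f ∈ multiplicityTuples n k, ∏ ℓ : Fin n, (ℓ.val + 1).factorial ^ f ℓ
      ≤ #(multiplicityTuples n k) * (n - k + 1).factorial :=
        sum_le_card_nsmul _ _ _ fun f hf => prod_factorial_pow_le_of_mem hf
    _ ≤ (n - k + 1) ^ (k - 1) * (n - k + 1).factorial := by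
        gcongr; exact card_multiplicityTuples_le n k
    _ ≤ (n - k + 1).factorial * (n - k + 1 + 1) ^ (k - 1) := by
        rw [mul_comm]; gcongr; omega
    _ ≤ n.factorial := by
        convert Nat.factorial_mul_pow_le_factorial using 2; omega
end

section
/- Let ψ be a real polynomial of even degree 2p ≥ 2 with no real fixed point (ψ(x) ≠ x for all x ∈ ℝ). Then for every b > 1 there exists m₀ ∈ ℕ such that for all x ∈ ℝ and all k ∈ ℕ, |ψ_{m₀+k}(x)| ≥ b^{2^k}. -/
/-!
Conjugating by `x ↦ -x` reduces to a positive leading coefficient. Then `ψ(x) - x` is a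
polynomial of even positive degree without real roots, so it is bounded below by some `ε > 0`:
every step of the orbit gains at least `ε`, and since `ψ` is bounded below, after `m` steps every
orbit exceeds any prescribed level uniformly in the starting point. Once `c·x ≥ M` for a constant
with `ψ(y) ≥ c y²` for large `y`, the quantity `c·x` is at least squared by each further step,
which gives the doubly exponential growth `M ^ 2 ^ k`.
-/

open Polynomial Filter Function

section Dynamics

variable {f : ℝ → ℝ} {ε c M : ℝ}

lemma add_mul_le_iterate_of_add_le (hε : ∀ x, x + ε ≤ f x) (n : ℕ) (x : ℝ) :
    x + n * ε ≤ f^[n] x := by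
  induction n generalizing x with
  | zero => simp
  | succ n ih =>
    rw [iterate_succ_apply']
    push_cast
    linarith [ih x, hε (f^[n] x)]

lemma pow_two_pow_le_mul_iterate (hsq : ∀ y, M ≤ c * y → c * y ^ 2 ≤ f y) (hc : 0 < c)
    (hM : 1 ≤ M) {u : ℝ} (hu : M ≤ c * u) (k : ℕ) : M ^ 2 ^ k ≤ c * f^[k] u := by
  induction k with
  | zero => simpa using hu
  | succ k ih =>
    have hM_le : M ≤ c * f^[k] u := (le_self_pow₀ hM (by positivity)).trans ih
    calc M ^ 2 ^ (k + 1) = (M ^ 2 ^ k) ^ 2 := by rw [pow_succ, pow_mul]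
      _ ≤ (c * f^[k] u) ^ 2 := pow_le_pow_left₀ (by positivity) ih 2
      _ = c * (c * (f^[k] u) ^ 2) := by ring
      _ ≤ c * f (f^[k] u) := mul_le_mul_of_nonneg_left (hsq _ hM_le) hc.le
      _ = c * f^[k + 1] u := by rw [iterate_succ_apply']

theorem exists_pow_two_pow_le_iterate {L : ℝ} (hL : ∀ x, L ≤ f x) (hε0 : 0 < ε)
    (hε : ∀ x, x + ε ≤ f x) (hc0 : 0 < c) (hc1 : c ≤ 1)
    (hsq : ∀ᶠ y in atTop, c * y ^ 2 ≤ f y) (b : ℝ) :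
    ∃ m₀ : ℕ, ∀ x k, b ^ 2 ^ k ≤ f^[m₀ + k] x := by
  obtain ⟨R, hR⟩ := eventually_atTop.1 hsq
  set M := max (max 1 |b|) (c * R)
  obtain ⟨m, hm⟩ := exists_nat_ge ((M / c - L) / ε)
  rw [div_le_iff₀ hε0] at hm
  refine ⟨m + 1, fun x k => ?_⟩
  have hu : M ≤ c * f^[m + 1] x := by
    have := add_mul_le_iterate_of_add_le hε m (f x)
    rw [← iterate_succ_apply] at this
    rw [← div_le_iff₀' hc0]
    linarith [hL x]
  have hgrowth := pow_two_pow_le_mul_iterate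
    (fun y hy => hR y (le_of_mul_le_mul_left ((le_max_right _ _).trans hy) hc0)) hc0
    (le_max_of_le_left (le_max_left _ _)) hu k
  have hpos : 0 ≤ f^[k] (f^[m + 1] x) :=
    nonneg_of_mul_nonneg_right ((pow_nonneg (by positivity) _).trans hgrowth) hc0
  calc b ^ 2 ^ k ≤ |b| ^ 2 ^ k := (le_abs_self _).trans (abs_pow b _).le
    _ ≤ M ^ 2 ^ k := pow_le_pow_left₀ (abs_nonneg b) (le_max_of_le_left (le_max_right _ _)) _
    _ ≤ c * f^[k] (f^[m + 1] x) := hgrowth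
    _ ≤ f^[m + 1 + k] x := by
      rw [add_comm (m + 1) k, iterate_add_apply f k (m + 1)]
      exact mul_le_of_le_one_left hpos hc1

end Dynamics

theorem Continuous.exists_pos_forall_le {X : Type*} [TopologicalSpace X] [PreconnectedSpace X]
    [NoncompactSpace X] {f : X → ℝ} (hf : Continuous f) (hlim : Tendsto f (cocompact X) atTop)
    (hne : ∀ x, f x ≠ 0) : ∃ ε > 0, ∀ x, ε ≤ f x := by
  obtain ⟨y, hy⟩ := (hlim.eventually (eventually_ge_atTop 0)).exists
  have : Nonempty X := ⟨y⟩
  obtain ⟨x₀, hx₀⟩ := hf.exists_forall_le hlim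
  refine ⟨f x₀, (hne x₀).lt_or_gt.resolve_left fun hneg => ?_, hx₀⟩
  obtain ⟨z, hz⟩ := intermediate_value_univ x₀ y hf ⟨hneg.le, hy⟩
  exact hne z hz

namespace Polynomial

variable {P : ℝ[X]}

theorem tendsto_eval_cocompact_atTop (hdeg : 0 < P.degree) (he : Even P.natDegree)
    (hl : 0 ≤ P.leadingCoeff) : Tendsto P.eval (cocompact ℝ) atTop := by
  have hneg : Tendsto (P.comp (-X)).eval atTop atTop :=
    (P.comp (-X)).tendsto_atTop_of_leadingCoeff_nonneg (by simpa using hdeg)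
      (by simpa [he.neg_one_pow] using hl)
  rw [cocompact_eq_atBot_atTop, tendsto_sup]
  refine ⟨?_, P.tendsto_atTop_of_leadingCoeff_nonneg hdeg hl⟩
  simpa [Function.comp_def] using hneg.comp tendsto_neg_atBot_atTop

theorem exists_mul_sq_le_eval (hdeg : 2 ≤ P.degree) (hl : 0 ≤ P.leadingCoeff) :
    ∃ c, 0 < c ∧ c ≤ 1 ∧ ∀ᶠ y in atTop, c * y ^ 2 ≤ P.eval y := by
  obtain ⟨C, hC, hbound⟩ :=
    (isBigO_atTop_of_degree_le (X ^ 2) P (by simpa using hdeg)).exists_pos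
  have hP_nonneg : ∀ᶠ y in atTop, 0 ≤ P.eval y :=
    (P.tendsto_atTop_of_leadingCoeff_nonneg ((by norm_num : (0 : WithBot ℕ) < 2).trans_le hdeg)
      hl).eventually (eventually_ge_atTop 0)
  refine ⟨min 1 C⁻¹, by positivity, min_le_left _ _, ?_⟩
  filter_upwards [hbound.bound, hP_nonneg] with y hy hPy
  simp only [eval_pow, eval_X, Real.norm_eq_abs, abs_pow, sq_abs, abs_of_nonneg hPy] at hy
  calc min 1 C⁻¹ * y ^ 2 ≤ C⁻¹ * y ^ 2 := by gcongr; exact min_le_right _ _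
    _ ≤ P.eval y := by rw [inv_mul_le_iff₀ hC]; exact hy

theorem exists_pow_two_pow_le_iterate_eval (hdeg : 2 ≤ P.natDegree) (he : Even P.natDegree)
    (hl : 0 < P.leadingCoeff) (hfix : ∀ x, P.eval x ≠ x) (b : ℝ) :
    ∃ m₀ : ℕ, ∀ x k, b ^ 2 ^ k ≤ P.eval^[m₀ + k] x := by
  have hX : (X : ℝ[X]).natDegree < P.natDegree := by rw [natDegree_X]; omega
  have hdeg' : 2 ≤ P.degree := by
    rw [degree_eq_natDegree (ne_zero_of_natDegree_gt hX)]; exact_mod_cast hdeg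
  obtain ⟨x₀, hx₀⟩ := P.continuous.exists_forall_le
    (tendsto_eval_cocompact_atTop ((by norm_num : (0 : WithBot ℕ) < 2).trans_le hdeg') he hl.le)
  have hdisp_deg : (P - X).natDegree = P.natDegree := natDegree_sub_eq_left_of_natDegree_lt hX
  have hdisp_lc : (P - X).leadingCoeff = P.leadingCoeff :=
    leadingCoeff_sub_of_degree_lt (degree_lt_degree hX)
  obtain ⟨ε, hε0, hε⟩ := (P - X).continuous.exists_pos_forall_le
    (tendsto_eval_cocompact_atTop (natDegree_pos_iff_degree_pos.1 (by omega))
      (hdisp_deg ▸ he) (hdisp_lc ▸ hl.le))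
    (fun x => by simpa [sub_eq_zero] using hfix x)
  obtain ⟨c, hc0, hc1, hsq⟩ := exists_mul_sq_le_eval hdeg' hl.le
  refine exists_pow_two_pow_le_iterate hx₀ hε0 (fun x => ?_) hc0 hc1 hsq b
  linarith [show ε ≤ P.eval x - x by simpa using hε x]

theorem exists_pow_two_pow_le_abs_iterate_eval (hdeg : 2 ≤ P.natDegree)
    (he : Even P.natDegree) (hfix : ∀ x, P.eval x ≠ x) (b : ℝ) :
    ∃ m₀ : ℕ, ∀ x k, b ^ 2 ^ k ≤ |P.eval^[m₀ + k] x| := by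
  have hP : P ≠ 0 := ne_zero_of_natDegree_gt (by omega : 0 < P.natDegree)
  rcases (leadingCoeff_ne_zero.2 hP).lt_or_gt with hneg | hpos
  · set Q := -P.comp (-X)
    have hconj : Semiconj Neg.neg Q.eval P.eval := fun x => by simp [Q]
    have hQ_deg : Q.natDegree = P.natDegree := by simp [Q, natDegree_comp]
    have hQ_lc : Q.leadingCoeff = -P.leadingCoeff := by simp [Q, he.neg_one_pow]
    obtain ⟨m₀, hm₀⟩ := exists_pow_two_pow_le_iterate_eval (hQ_deg ▸ hdeg) (hQ_deg ▸ he)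
      (by rw [hQ_lc]; linarith) (fun x h => hfix (-x) (by simpa [Q, neg_eq_iff_eq_neg] using h))
      b
    refine ⟨m₀, fun x k => (hm₀ (-x) k).trans ?_⟩
    have := hconj.iterate_right (m₀ + k) (-x)
    rw [neg_neg] at this
    rw [← neg_neg (Q.eval^[m₀ + k] (-x)), this]
    exact neg_le_abs _
  · obtain ⟨m₀, hm₀⟩ := exists_pow_two_pow_le_iterate_eval hdeg he hpos hfix b
    exact ⟨m₀, fun x k => (hm₀ x k).trans (le_abs_self _)⟩

end Polynomial

theorem stmt_7 (p : ℕ) (hp : 1 ≤ p) (ψ : Polynomial ℝ)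
    (hdeg : ψ.natDegree = 2 * p)
    (hfix : ∀ x : ℝ, ψ.eval x ≠ x) :
    ∀ b : ℝ, 1 < b → ∃ m₀ : ℕ,
      ∀ x : ℝ, ∀ k : ℕ, 1 ≤ k →
        b ^ (2 ^ k) ≤ |(fun y : ℝ => ψ.eval y)^[m₀ + k] x| := by
  intro b _
  obtain ⟨m₀, hm₀⟩ := ψ.exists_pow_two_pow_le_abs_iterate_eval (by omega)
    (hdeg ▸ even_two_mul p) hfix b
  exact ⟨m₀, fun x k _ => hm₀ x k⟩
end

section
/- Let (y_n) be the real sequence defined by y_0 ≥ 4 and y_{n+1} = √(2y_n − 1). Then y_n ≥ ((n+2)/(n+1))² for all n ∈ ℕ₀. -/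
theorem stmt_14 (y : ℕ → ℝ) (h0 : 4 ≤ y 0)
    (hrec : ∀ n : ℕ, y (n + 1) = Real.sqrt (2 * y n - 1)) :
    ∀ n : ℕ, ((n + 2 : ℝ) / (n + 1)) ^ 2 ≤ y n := by
  intro n
  induction n with
  | zero => norm_num; linarith
  | succ n ih =>
    have hn : (0:ℝ) ≤ (n:ℝ) := Nat.cast_nonneg n
    have h1 : (0:ℝ) < (n:ℝ) + 1 := by positivity
    have key : ((((n:ℝ)) + 1 + 2) / (((n:ℝ)) + 1 + 1)) ^ 2 ^ 2 ≤
        2 * (((n:ℝ) + 2) / ((n:ℝ) + 1)) ^ 2 - 1 := by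
      have e : 2 * (((n:ℝ) + 2) / ((n:ℝ) + 1)) ^ 2 - 1
          = (2 * ((n:ℝ) + 2) ^ 2 - ((n:ℝ) + 1) ^ 2) / ((n:ℝ) + 1) ^ 2 := by
        field_simp
      rw [e]
      norm_num
      rw [div_pow, div_le_div_iff₀ (by positivity) (by positivity)]
      nlinarith [hn, sq_nonneg ((n:ℝ)), pow_pos h1 2]
    have hb : (1:ℝ) ≤ (((n:ℝ) + 2) / ((n:ℝ) + 1)) ^ 2 := by
      have : (1:ℝ) ≤ ((n:ℝ) + 2) / ((n:ℝ) + 1) := by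
        rw [le_div_iff₀ h1]; linarith
      nlinarith [this]
    rw [hrec]
    have hx : (0:ℝ) ≤ 2 * y n - 1 := by nlinarith [ih, hb]
    rw [Real.le_sqrt (by positivity) hx]
    push_cast
    nlinarith [key, ih, hb]
end

section
/- Let ψ(x) = x² + 1/4, let x_0 ≥ 2, and define x_{n+1} ≥ 0 by x_{n+1}² + 1/4 = x_n. Set y_k = 2x_k. Then for every n ∈ ℕ, the derivative of the n-th iterate satisfies ψ_n'(x_n) = ∏_{j=0}^{n−1} 2ψ_j(x_n) = ∏_{k=1}^{n} y_k, and ψ_n'(x_n)^n ≥ ((n+2)²/4)^n. -/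
/-!
The chain rule turns `ψ_n'(x_n)` into `∏_{j<n} 2 ψ_j(x_n)`, and since `ψ` maps `x_{k+1}` to `x_k`,
`ψ_j(x_n) = x_{n-j}`, so this is `∏_{k=1}^n y_k`. The sequence `y_k = 2 x_k` obeys
`y_{k+1}² + 1 = 2 y_k` with `y_0 ≥ 4`, and induction gives `y_k ≥ ((k+2)/(k+1))²`; the product of these
lower bounds telescopes to `((n+2)/2)²`.
-/

open Finset

theorem hasDerivAt_iterate_of_forall {𝕜 : Type*} [NontriviallyNormedField 𝕜] {f f' : 𝕜 → 𝕜}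
    (hf : ∀ t, HasDerivAt f (f' t) t) (n : ℕ) (t : 𝕜) :
    HasDerivAt f^[n] (∏ j ∈ range n, f' (f^[j] t)) t := by
  induction n with
  | zero => simpa using hasDerivAt_id t
  | succ n ih =>
    rw [Function.iterate_succ', prod_range_succ, mul_comm]
    exact (hf _).comp t ih

section BackwardOrbit

variable {α : Type*} {f : α → α} {x : ℕ → α}

theorem iterate_apply_add_eq (hx : ∀ n, f (x (n + 1)) = x n) (n j : ℕ) :
    f^[j] (x (n + j)) = x n := by
  induction j with
  | zero => rfl
  | succ j ih => rw [Function.iterate_succ_apply, ← add_assoc, hx, ih]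

theorem prod_range_iterate_eq_prod_Icc {M : Type*} [CommMonoid M] (hx : ∀ n, f (x (n + 1)) = x n)
    (g : α → M) (n : ℕ) :
    ∏ j ∈ range n, g (f^[j] (x n)) = ∏ k ∈ Icc 1 n, g (x k) := by
  induction n with
  | zero => simp
  | succ n ih =>
    have hshift : ∀ j, f^[j + 1] (x (n + 1)) = f^[j] (x n) := fun j => by
      rw [Function.iterate_succ_apply, hx]
    simp only [prod_range_succ', hshift, ih, Function.iterate_zero_apply]
    rw [prod_Icc_succ_top (Nat.le_add_left 1 n)]

end BackwardOrbit

theorem add_three_pow_four_mul_le {m : ℝ} (hm : 0 ≤ m) :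
    (m + 3) ^ 4 * (m + 1) ^ 2 ≤ (2 * (m + 2) ^ 2 - (m + 1) ^ 2) * (m + 2) ^ 4 := by
  nlinarith [sq_nonneg m, sq_nonneg (m * m), mul_nonneg hm (sq_nonneg m)]

theorem add_three_sq_le_of_add_two_sq_le {m a b : ℝ} (hm : 0 ≤ m) (hb : 0 ≤ b)
    (hab : b ^ 2 + 1 = 2 * a) (ha : (m + 2) ^ 2 ≤ a * (m + 1) ^ 2) :
    (m + 3) ^ 2 ≤ b * (m + 2) ^ 2 := by
  have hsq : ((m + 3) ^ 2) ^ 2 * (m + 1) ^ 2 ≤ (b * (m + 2) ^ 2) ^ 2 * (m + 1) ^ 2 :=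
    calc ((m + 3) ^ 2) ^ 2 * (m + 1) ^ 2
        ≤ (2 * (m + 2) ^ 2 - (m + 1) ^ 2) * (m + 2) ^ 4 := by
          simpa [← pow_mul] using add_three_pow_four_mul_le hm
      _ ≤ (2 * (a * (m + 1) ^ 2) - (m + 1) ^ 2) * (m + 2) ^ 4 := by gcongr
      _ = (b * (m + 2) ^ 2) ^ 2 * (m + 1) ^ 2 := by
          linear_combination -(m + 1) ^ 2 * (m + 2) ^ 4 * hab
  have hsq' := le_of_mul_le_mul_right hsq (by positivity)
  exact (pow_le_pow_iff_left₀ (by positivity) (by positivity) two_ne_zero).mp hsq'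

section BackwardSequence

variable {y : ℕ → ℝ} (hy0 : 4 ≤ y 0) (hy_nonneg : ∀ n, 0 ≤ y (n + 1))
  (hy_rec : ∀ n, y (n + 1) ^ 2 + 1 = 2 * y n)
include hy0 hy_nonneg hy_rec

theorem add_two_sq_le_mul_add_one_sq (k : ℕ) : ((k : ℝ) + 2) ^ 2 ≤ y k * ((k : ℝ) + 1) ^ 2 := by
  induction k with
  | zero => norm_num; linarith
  | succ k ih =>
    push_cast
    rw [show (k : ℝ) + 1 + 2 = k + 3 by ring, show (k : ℝ) + 1 + 1 = k + 2 by ring]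
    exact add_three_sq_le_of_add_two_sq_le k.cast_nonneg (hy_nonneg k) (hy_rec k) ih

theorem add_two_sq_div_four_le_prod_Icc (n : ℕ) :
    ((n : ℝ) + 2) ^ 2 / 4 ≤ ∏ k ∈ Icc 1 n, y k := by
  induction n with
  | zero => norm_num
  | succ n ih =>
    rw [prod_Icc_succ_top (Nat.le_add_left 1 n)]
    have hstep := add_two_sq_le_mul_add_one_sq hy0 hy_nonneg hy_rec (n + 1)
    push_cast at hstep ⊢
    calc ((n : ℝ) + 1 + 2) ^ 2 / 4 ≤ ((n : ℝ) + 2) ^ 2 / 4 * y (n + 1) := by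
          rw [show (n : ℝ) + 1 + 1 = n + 2 by ring] at hstep; linarith
      _ ≤ (∏ k ∈ Icc 1 n, y k) * y (n + 1) := by gcongr; exact hy_nonneg n

end BackwardSequence

theorem stmt_17 (ψ : ℝ → ℝ) (hψ : ∀ t, ψ t = t ^ 2 + 1 / 4)
    (x : ℕ → ℝ) (hx0 : 2 ≤ x 0)
    (hpos : ∀ n : ℕ, 0 ≤ x (n + 1))
    (hrec : ∀ n : ℕ, (x (n + 1)) ^ 2 + 1 / 4 = x n)
    (y : ℕ → ℝ) (hy : ∀ k, y k = 2 * x k) :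
    ∀ n : ℕ, 1 ≤ n →
      deriv (ψ^[n]) (x n) = ∏ j ∈ Finset.range n, 2 * ψ^[j] (x n) ∧
      deriv (ψ^[n]) (x n) = ∏ k ∈ Finset.Icc 1 n, y k ∧
      (((n : ℝ) + 2) ^ 2 / 4) ^ n ≤ (deriv (ψ^[n]) (x n)) ^ n := by
  intro n _
  have hψ_deriv : ∀ t, HasDerivAt ψ (2 * t) t := fun t => by
    rw [show ψ = fun s => s ^ 2 + 1 / 4 from funext hψ]
    simpa using (hasDerivAt_pow 2 t).add_const (1 / 4)
  have hψ_back : ∀ k, ψ (x (k + 1)) = x k := fun k => (hψ _).trans (hrec k)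
  have hd_range : deriv (ψ^[n]) (x n) = ∏ j ∈ range n, 2 * ψ^[j] (x n) :=
    (hasDerivAt_iterate_of_forall hψ_deriv n (x n)).deriv
  have hd_Icc : deriv (ψ^[n]) (x n) = ∏ k ∈ Icc 1 n, y k := by
    rw [hd_range, prod_range_iterate_eq_prod_Icc hψ_back (fun t => 2 * t)]
    simp only [hy]
  have hy0 : 4 ≤ y 0 := by linarith [hy 0]
  have hy_nonneg : ∀ k, 0 ≤ y (k + 1) := fun k => by linarith [hy (k + 1), hpos k]
  have hy_rec : ∀ k, y (k + 1) ^ 2 + 1 = 2 * y k := fun k => by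
    rw [hy, hy]; linear_combination 4 * hrec k
  refine ⟨hd_range, hd_Icc, ?_⟩
  rw [hd_Icc]
  exact pow_le_pow_left₀ (by positivity) (add_two_sq_div_four_le_prod_Icc hy0 hy_nonneg hy_rec n) n
end
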